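/- arXiv:1608.04913 — 2 statements merged into one kernel-verified Lean document; each statement's English description precedes it below -/
import Mathlib

section
/- (Gale–Stewart, closed determinacy) Let X be a nonempty set and let A ⊆ X^ℕ be closed in the product topology (where X is discrete). In the infinite game where Player 1 and Player 2 alternate choosing elements of X (Player 1 first) and Player 2 wins iff the resulting sequence lies in A, one of the two players has a winning strategy. -/
/-- The play `f` follows strategy `σ` for Player 1 (who moves at even rounds). -/
def FollowsP1 {X : Type*} (σ : List X → X) (f : ℕ → X) : Prop :=
  ∀ n : ℕ, f (2 * n) = σ (List.ofFn (fun i : Fin (2 * n) => f i))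

/-- The play `f` follows strategy `σ` for Player 2 (who moves at odd rounds). -/
def FollowsP2 {X : Type*} (σ : List X → X) (f : ℕ → X) : Prop :=
  ∀ n : ℕ, f (2 * n + 1) = σ (List.ofFn (fun i : Fin (2 * n + 1) => f i))

/-!
Call a position `p` won by Player 1 if Player 1 has a strategy that, from `p` on, keeps every
play out of `A`. Gluing strategies shows that a position is won by Player 1 as soon as one move of
Player 1, or every move of either player, leads to a won position. So if Player 1 does not win
from the start, Player 2 can always move to a position not won by Player 1, and Player 1 can never
move into a won one. A position not won by Player 1 extends to a point of `A` (otherwise every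
strategy wins from it), so every prefix of the resulting play extends to a point of `A`, and the
play lies in `A` because `A` is closed.
-/

namespace GaleStewart

variable {X : Type*}

def pre (f : ℕ → X) (n : ℕ) : List X := List.ofFn fun i : Fin n => f i

@[simp] lemma length_pre (f : ℕ → X) (n : ℕ) : (pre f n).length = n := List.length_ofFn

lemma pre_succ (f : ℕ → X) (n : ℕ) : pre f (n + 1) = pre f n ++ [f n] := by
  rw [pre, List.ofFn_succ', List.concat_eq_append]
  rfl

@[simp] lemma getElem_pre (f : ℕ → X) {n i : ℕ} (h : i < (pre f n).length) :
    (pre f n)[i] = f i :=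
  List.getElem_ofFn h

lemma pre_eq_pre_iff_mem_cylinder {f g : ℕ → X} {n : ℕ} :
    pre g n = pre f n ↔ g ∈ PiNat.cylinder f n := by
  simp [pre, List.ofFn_inj, funext_iff, Fin.forall_iff, PiNat.mem_cylinder_iff]

lemma _root_.FollowsP1.apply_of_even {σ : List X → X} {f : ℕ → X} (hf : FollowsP1 σ f)
    {n : ℕ} (hn : Even n) : f n = σ (pre f n) := by
  obtain ⟨k, rfl⟩ := hn
  rw [← two_mul]
  exact hf k

lemma _root_.FollowsP2.apply_of_odd {σ : List X → X} {f : ℕ → X} (hf : FollowsP2 σ f)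
    {n : ℕ} (hn : Odd n) : f n = σ (pre f n) := by
  obtain ⟨k, rfl⟩ := hn
  exact hf k

def P1WinsFrom (A : Set (ℕ → X)) (p : List X) : Prop :=
  ∃ σ : List X → X, ∀ f : ℕ → X, pre f p.length = p →
    (∀ n ≥ p.length, Even n → f n = σ (pre f n)) → f ∉ A

variable {A : Set (ℕ → X)} {p : List X}

lemma P1WinsFrom.of_append (hp : Even p.length) {x : X} (h : P1WinsFrom A (p ++ [x])) :
    P1WinsFrom A p := by
  classical
  obtain ⟨σ, hσ⟩ := h
  refine ⟨Function.update σ p x, fun f hfp hf => hσ f ?_ fun n hn he => ?_⟩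
  · have hx : f p.length = x := by simpa [hfp] using hf p.length le_rfl hp
    simp [pre_succ, hfp, hx]
  · have hpn : p.length < n := by simpa using hn
    rw [hf n hpn.le he, Function.update_of_ne]
    exact fun h => hpn.ne' (by simpa using congrArg List.length h)

lemma P1WinsFrom.of_forall_append [Nonempty X] (h : ∀ x, P1WinsFrom A (p ++ [x])) :
    P1WinsFrom A p := by
  choose σ hσ using h
  -- follow the strategy of the child `p ++ [x]` that the play went through
  refine ⟨fun q => σ (q.getD p.length (Classical.arbitrary X)) q,
    fun f hfp hf => hσ (f p.length) f ?_ fun n hn he => ?_⟩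
  · simp [pre_succ, hfp]
  · have hpn : p.length < n := by simpa using hn
    rw [hf n hpn.le he]
    beta_reduce
    rw [List.getD_eq_getElem _ _ (by simpa using hpn), getElem_pre]

lemma exists_mem_pre_eq_of_not_p1WinsFrom [Nonempty X] (h : ¬P1WinsFrom A p) :
    ∃ g ∈ A, pre g p.length = p := by
  by_contra! hA
  exact h ⟨fun _ => Classical.arbitrary X, fun f hfp _ hf => hA f hf hfp⟩

noncomputable def avoidP1Win [Nonempty X] (A : Set (ℕ → X)) (p : List X) : X :=
  Classical.epsilon fun x => ¬P1WinsFrom A (p ++ [x])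

lemma not_p1WinsFrom_pre [Nonempty X] (h₀ : ¬P1WinsFrom A []) {f : ℕ → X}
    (hf : FollowsP2 (avoidP1Win A) f) : ∀ n, ¬P1WinsFrom A (pre f n)
  | 0 => h₀
  | n + 1 => by
    have ih := not_p1WinsFrom_pre h₀ hf n
    rw [pre_succ]
    rcases Nat.even_or_odd n with hn | hn
    · exact fun h => ih (h.of_append (by simpa))
    · have : ∃ x, ¬P1WinsFrom A (pre f n ++ [x]) := by
        by_contra! h
        exact ih (.of_forall_append h)
      rw [hf.apply_of_odd hn]
      exact Classical.epsilon_spec this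

lemma mem_of_forall_exists_pre_eq [TopologicalSpace X] [DiscreteTopology X] (hA : IsClosed A)
    {f : ℕ → X} (h : ∀ n, ∃ g ∈ A, pre g n = pre f n) : f ∈ A := by
  by_contra hf
  obtain ⟨n, hn⟩ := PiNat.exists_disjoint_cylinder hA hf
  obtain ⟨g, hg, hgf⟩ := h n
  exact Set.disjoint_left.1 hn hg (pre_eq_pre_iff_mem_cylinder.1 hgf)

end GaleStewart

open GaleStewart

/-- Gale–Stewart: closed games are determined (X discrete, `ℕ → X` with the
product topology; Player 2 wins iff the play lies in the closed set `A`). -/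
theorem stmt1 {X : Type*} [Nonempty X] [TopologicalSpace X] [DiscreteTopology X]
    (A : Set (ℕ → X)) (hA : IsClosed A) :
    (∃ σ : List X → X, ∀ f : ℕ → X, FollowsP1 σ f → f ∉ A) ∨
    (∃ σ : List X → X, ∀ f : ℕ → X, FollowsP2 σ f → f ∈ A) := by
  by_cases h₀ : P1WinsFrom A []
  · obtain ⟨σ, hσ⟩ := h₀
    exact Or.inl ⟨σ, fun f hf => hσ f rfl fun n _ hn => hf.apply_of_even hn⟩
  · refine Or.inr ⟨avoidP1Win A, fun f hf => mem_of_forall_exists_pre_eq hA fun n => ?_⟩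
    simpa using exists_mem_pre_eq_of_not_p1WinsFrom (not_p1WinsFrom_pre h₀ hf n)
end

section
/- Assume there is a well-ordering of the reals (e.g. full AC). Then there exists an equivalence relation E on Baire space ℕ → ℕ such that every equivalence class of E has at most two elements, and for every perfect subset P of Baire space there exist distinct x, y ∈ P with x E y (so E admits no perfect set of pairwise inequivalent elements). -/
/-!
There are at most `𝔠` nonempty perfect subsets of Baire space, since they are closed in a
second-countable space, so they can be listed in order type `𝔠`. Each of them has cardinality
`𝔠`, being a nonempty perfect subset of a Polish space. By transfinite recursion, pick in the
`t`-th perfect set two points avoiding the fewer than `𝔠` points picked at earlier stages. The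
pairs so obtained are pairwise disjoint, and the equivalence relation whose nontrivial classes
are exactly these pairs meets every nonempty perfect set in two distinct equivalent points.
-/

open Cardinal Set Function

universe u

theorem Perfect.continuum_le_mk {X : Type u} [TopologicalSpace X] [PolishSpace X] {C : Set X}
    (hC : Perfect C) (hne : C.Nonempty) : 𝔠 ≤ #C := by
  let := TopologicalSpace.upgradeIsCompletelyMetrizable X
  obtain ⟨f, hfC, -, hf⟩ := hC.exists_nat_bool_injection hne
  have hinj : Injective (codRestrict f C fun x => hfC (mem_range_self x)) :=
    injective_codRestrict _ |>.mpr hf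
  simpa using lift_mk_le_lift_mk_of_injective hinj

theorem mk_setOf_isClosed_le_continuum {X : Type u} [TopologicalSpace X]
    [SecondCountableTopology X] : #{C : Set X | IsClosed C} ≤ 𝔠 := by
  obtain ⟨b, hbc, -, hb⟩ := TopologicalSpace.exists_countable_basis X
  have hinj : Injective fun C : {C : Set X | IsClosed C} =>
      {U : b | (U : Set X) ⊆ (C : Set X)ᶜ} := by
    rintro ⟨C, hC⟩ ⟨D, hD⟩ h
    have hcompl := hb.eq_of_forall_subset_iff hC.isOpen_compl hD.isOpen_compl
      fun U hU => Set.ext_iff.mp h ⟨U, hU⟩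
    exact Subtype.ext (compl_injective hcompl)
  calc #{C : Set X | IsClosed C} ≤ #(Set b) := mk_le_of_injective hinj
    _ = 2 ^ #b := mk_set
    _ ≤ 2 ^ ℵ₀ := power_le_power_left two_ne_zero (mk_le_aleph0_iff.mpr hbc.to_subtype)
    _ = 𝔠 := two_power_aleph0

theorem le_mk_sdiff_of_lt {X : Type u} {κ : Cardinal.{u}} (hκ : ℵ₀ ≤ κ) {S T : Set X}
    (hS : κ ≤ #S) (hT : #T < κ) : κ ≤ #(S \ T : Set X) := by
  by_contra! h
  exact (hS.trans (le_mk_sdiff_add_mk S T)).not_gt (add_lt_of_lt hκ h hT)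

section TransfiniteDiagonalization

variable {X β : Type u} {κ : Cardinal.{u}}

theorem exists_injective_prod_mem_of_le_mk (hκ : ℵ₀ ≤ κ) (hβ : #β < κ)
    (g : κ.ord.ToType → Set X) (hg : ∀ t, κ ≤ #(g t)) :
    ∃ f : κ.ord.ToType × β → X, Injective f ∧ ∀ p, f p ∈ g p.1 := by
  let used (t : κ.ord.ToType) (prev : ∀ s < t, β → X) : Set X :=
    range fun p : Iio t × β => prev p.1 p.1.2 p.2
  have hused (t prev) : #(used t prev) < κ := by
    refine mk_range_le.trans_lt ?_
    rw [mk_prod, lift_id, lift_id]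
    exact mul_lt_of_lt hκ (by simpa using mk_Iio_lt t) hβ
  have hstep (t prev) : Nonempty (β ↪ (g t \ used t prev : Set X)) :=
    le_def _ _ |>.mp (hβ.le.trans (le_mk_sdiff_of_lt hκ (hg t) (hused t prev)))
  let step (t : κ.ord.ToType) (prev : ∀ s < t, β → X) (b : β) : X :=
    Classical.choice (hstep t prev) b
  let F : κ.ord.ToType → β → X := wellFounded_lt.fix step
  have hF (t : κ.ord.ToType) (b : β) :
      F t b = (Classical.choice (hstep t fun s _ => F s) b : X) :=
    congrFun (wellFounded_lt.fix_eq step t) b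
  have hF_mem (t : κ.ord.ToType) (b : β) : F t b ∈ g t \ used t fun s _ => F s :=
    hF t b ▸ (Classical.choice (hstep t fun s _ => F s) b).2
  have hF_ne {s t : κ.ord.ToType} (hst : s < t) (i j : β) : F s i ≠ F t j := fun h =>
    (hF_mem t j).2 ⟨(⟨s, hst⟩, i), h⟩
  refine ⟨fun p => F p.1 p.2, ?_, fun p => (hF_mem p.1 p.2).1⟩
  rintro ⟨s, i⟩ ⟨t, j⟩ h
  rcases lt_trichotomy s t with hst | rfl | hts
  · exact absurd h (hF_ne hst i j)
  · change F s i = F s j at h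
    rw [hF, hF] at h
    exact congrArg _ ((Classical.choice (hstep s fun s _ => F s)).injective (Subtype.ext h))
  · exact absurd h.symm (hF_ne hts j i)

theorem exists_injective_prod_mem_of_mk_le (hκ : ℵ₀ ≤ κ) (hβ : #β < κ) (𝒮 : Set (Set X))
    (h𝒮 : #𝒮 ≤ κ) (hS : ∀ S ∈ 𝒮, κ ≤ #S) :
    ∃ f : 𝒮 × β → X, Injective f ∧ ∀ p, f p ∈ (p.1 : Set X) := by
  rcases isEmpty_or_nonempty 𝒮 with _ | _
  · exact ⟨isEmptyElim, fun p => isEmptyElim p, fun p => isEmptyElim p⟩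
  obtain ⟨e⟩ : Nonempty (𝒮 ↪ κ.ord.ToType) := le_def _ _ |>.mp (by simpa using h𝒮)
  obtain ⟨f, hf, hfg⟩ := exists_injective_prod_mem_of_le_mk hκ hβ
    (fun t => (invFun e t : 𝒮)) fun t => hS _ (invFun e t : 𝒮).2
  refine ⟨f ∘ Prod.map e id, hf.comp (e.injective.prodMap injective_id), fun p => ?_⟩
  have hmem := hfg (e p.1, p.2)
  rwa [leftInverse_invFun e.injective p.1] at hmem

end TransfiniteDiagonalization

theorem exists_equivalence_relating_pairs {ι X : Type*} {f : ι × Bool → X} (hf : Injective f) :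
    ∃ E : X → X → Prop, Equivalence E ∧ (∀ x, ∃ a b, {y | E x y} ⊆ {a, b}) ∧
      ∀ t, E (f (t, false)) (f (t, true)) := by
  -- `E` is the kernel of the map collapsing each pair `f (t, ·)` to `t` and fixing other points.
  let φ : X → ι ⊕ X := extend f (fun p => .inl p.1) .inr
  have hφ_range (p : ι × Bool) : φ (f p) = .inl p.1 := hf.extend_apply _ _ p
  have hφ_out {x : X} (hx : ¬∃ p, f p = x) : φ x = .inr x := extend_apply' _ _ x hx
  refine ⟨fun x y => φ x = φ y, ⟨fun _ => rfl, Eq.symm, Eq.trans⟩, fun x => ?_,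
    fun t => by simp only [hφ_range]⟩
  by_cases hx : ∃ p, f p = x
  · obtain ⟨⟨t, i⟩, rfl⟩ := hx
    refine ⟨f (t, false), f (t, true), fun y hy => ?_⟩
    by_cases hy' : ∃ q, f q = y
    · obtain ⟨⟨s, j⟩, rfl⟩ := hy'
      have hts : t = s := by simpa [hφ_range] using hy
      subst hts
      cases j <;> simp
    · simp [hφ_range, hφ_out hy'] at hy
  · refine ⟨x, x, fun y hy => ?_⟩
    by_cases hy' : ∃ q, f q = y
    · obtain ⟨q, rfl⟩ := hy'
      simp [hφ_range, hφ_out hx] at hy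
    · simp only [mem_ofPred_eq, hφ_out hx, hφ_out hy', Sum.inr.injEq] at hy
      simp [hy]

/-- (Under AC / a well-ordering of the reals) there is a thin equivalence relation
on Baire space all of whose classes have at most two elements: every nonempty
perfect set contains two distinct equivalent elements. -/
theorem stmt2 :
    ∃ E : (ℕ → ℕ) → (ℕ → ℕ) → Prop, Equivalence E ∧
      (∀ x, ∃ a b, {y | E x y} ⊆ {a, b}) ∧
      (∀ P : Set (ℕ → ℕ), Perfect P → P.Nonempty →
        ∃ x ∈ P, ∃ y ∈ P, x ≠ y ∧ E x y) := by
  let 𝒮 : Set (Set (ℕ → ℕ)) := {P | Perfect P ∧ P.Nonempty}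
  have h𝒮 : #𝒮 ≤ 𝔠 :=
    (mk_le_mk_of_subset fun P hP => hP.1.closed).trans mk_setOf_isClosed_le_continuum
  obtain ⟨f, hf, hf𝒮⟩ := exists_injective_prod_mem_of_mk_le (β := Bool) aleph0_le_continuum
    (by simpa using nat_lt_continuum 2) 𝒮 h𝒮 fun P hP => hP.1.continuum_le_mk hP.2
  obtain ⟨E, hE, hclass, hpair⟩ := exists_equivalence_relating_pairs hf
  refine ⟨E, hE, hclass, fun P hP hne => ?_⟩
  let P' : 𝒮 := ⟨P, hP, hne⟩
  exact ⟨f (P', false), hf𝒮 (P', false), f (P', true), hf𝒮 (P', true), hf.ne (by simp), hpair P'⟩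
end
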